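/- Let J be an N×N complex Hermitian matrix with distinct eigenvalues λ_1, ..., λ_N and define O_{ij} := (∑_{k=1}^N det(((λ_i I - J)(λ_j I - J)*)_{k|k})) / (∏_{p ≠ i}(λ_i - λ_p) · ∏_{q ≠ j} conj(λ_j - λ_q)). Then O_{ij} = δ_{ij} for all i, j. -/

import Mathlib

/-!
Diagonalise `J = U diag(μ) U*`. Then `(λ_i - J)(λ_j - J)* = U diag(d) U*` with
`d_l = (λ_i - μ_l) conj (λ_j - μ_l)`. The sum of the principal `(N-1)`-minors is the trace of the
adjugate, which is invariant under unitary conjugation and equals `∑_k ∏_{l ≠ k} d_l` on diagonal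
matrices. As `λ_i = μ_a` for some `a`, `d_a = 0` and only the term `k = a` survives; cancelling
the factor `X - λ_i` in `∏_l (X - μ_l) = ∏_m (X - λ_m)` turns it into
`∏_{m ≠ i} (λ_i - λ_m) · conj ∏_{m ≠ i} (λ_j - λ_m)`. For `i ≠ j` the second product contains
`λ_j - λ_j`; for `i = j` the expression is the denominator.
-/

open Finset Polynomial Matrix ComplexConjugate

namespace Finset

theorem sum_prod_erase_eq_of_eq_zero {ι R : Type*} [Fintype ι] [DecidableEq ι] [CommSemiring R]
    {d : ι → R} {a : ι} (ha : d a = 0) :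
    ∑ k, ∏ l ∈ univ.erase k, d l = ∏ l ∈ univ.erase a, d l :=
  Fintype.sum_eq_single a fun _k hk ↦
    prod_eq_zero (mem_erase.mpr ⟨fun h ↦ hk h.symm, mem_univ a⟩) ha

end Finset

namespace Polynomial

variable {ι κ R : Type*} [Fintype ι] [Fintype κ] [CommRing R] [IsDomain R]
  {u : ι → R} {v : κ → R}

theorem exists_eq_of_prod_X_sub_C_eq (h : ∏ l, (X - C (u l)) = ∏ m, (X - C (v m))) (b : κ) :
    ∃ a, u a = v b := by
  have hroot : (∏ l, (X - C (u l))).eval (v b) = 0 := by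
    rw [h, eval_prod]
    exact prod_eq_zero (mem_univ b) (by simp)
  obtain ⟨a, -, ha⟩ := prod_eq_zero_iff.mp (by simpa only [eval_prod] using hroot)
  exact ⟨a, (sub_eq_zero.mp (by simpa using ha)).symm⟩

theorem prod_erase_X_sub_C_eq [DecidableEq ι] [DecidableEq κ]
    (h : ∏ l, (X - C (u l)) = ∏ m, (X - C (v m))) {a : ι} {b : κ} (hab : u a = v b) :
    ∏ l ∈ univ.erase a, (X - C (u l)) = ∏ m ∈ univ.erase b, (X - C (v m)) := by
  refine mul_left_cancel₀ (X_sub_C_ne_zero (u a)) ?_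
  rw [mul_prod_erase _ (fun l ↦ X - C (u l)) (mem_univ a), hab,
    mul_prod_erase _ (fun m ↦ X - C (v m)) (mem_univ b), h]

end Polynomial

namespace Matrix

theorem sum_det_submatrix_succAbove_eq_trace_adjugate {n : ℕ} {R : Type*} [CommRing R]
    (A : Matrix (Fin (n + 1)) (Fin (n + 1)) R) :
    ∑ k : Fin (n + 1), (A.submatrix k.succAbove k.succAbove).det = A.adjugate.trace := by
  refine sum_congr rfl fun k _ ↦ ?_
  rw [diag_apply, adjugate_fin_succ_eq_det_submatrix, Even.neg_one_pow ⟨k, rfl⟩, one_mul]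

variable {ι R : Type*} [Fintype ι] [DecidableEq ι] [CommRing R]

theorem trace_adjugate_mul_mul_of_mul_eq_one {P Q : Matrix ι ι R} (hQP : Q * P = 1)
    (A : Matrix ι ι R) : (P * A * Q).adjugate.trace = A.adjugate.trace := by
  rw [adjugate_mul_distrib, adjugate_mul_distrib, trace_mul_comm, Matrix.mul_assoc,
    ← adjugate_mul_distrib, hQP, adjugate_one, Matrix.mul_one]

theorem trace_adjugate_diagonal (d : ι → R) :
    (diagonal d).adjugate.trace = ∑ k, ∏ l ∈ univ.erase k, d l := by
  rw [adjugate_diagonal, trace_diagonal]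

theorem IsHermitian.sum_det_submatrix_succAbove_smul_sub_mul_conjTranspose {n : ℕ} {𝕜 : Type*}
    [RCLike 𝕜] {J : Matrix (Fin (n + 1)) (Fin (n + 1)) 𝕜} (hJ : J.IsHermitian) (z w : 𝕜) :
    ∑ k : Fin (n + 1), (((z • 1 - J) * (w • 1 - J)ᴴ).submatrix k.succAbove k.succAbove).det =
      ∑ k, ∏ l ∈ univ.erase k,
        (z - hJ.eigenvalues l) * conj (w - hJ.eigenvalues l) := by
  set U := hJ.eigenvectorUnitary
  set D : Matrix (Fin (n + 1)) (Fin (n + 1)) 𝕜 := diagonal (RCLike.ofReal ∘ hJ.eigenvalues)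
  have hconj : (z • 1 - J) * (w • 1 - J)ᴴ =
      Unitary.conjStarAlgAut 𝕜 _ U ((z • 1 - D) * star (w • 1 - D)) := by
    rw [map_mul, map_star, map_sub, map_sub, map_smul, map_smul, map_one, ← hJ.spectral_theorem,
      star_eq_conjTranspose]
  have hdiag : (z • 1 - D) * star (w • 1 - D) =
      diagonal fun l ↦ (z - hJ.eigenvalues l) * conj (w - hJ.eigenvalues l) := by
    simp only [D, smul_one_eq_diagonal, diagonal_sub, star_eq_conjTranspose,
      diagonal_conjTranspose, diagonal_mul_diagonal]
    rfl
  rw [sum_det_submatrix_succAbove_eq_trace_adjugate, hconj, Unitary.conjStarAlgAut_apply,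
    trace_adjugate_mul_mul_of_mul_eq_one (Unitary.coe_star_mul_self U), hdiag,
    trace_adjugate_diagonal]

end Matrix

theorem stmt10 (n : ℕ) (J : Matrix (Fin (n + 1)) (Fin (n + 1)) ℂ)
    (hH : J.IsHermitian)
    (lam : Fin (n + 1) → ℂ) (hd : Function.Injective lam)
    (hJ : J.charpoly = ∏ j, (X - C (lam j)))
    (i j : Fin (n + 1)) :
    (∑ k : Fin (n + 1),
        Matrix.det
          (((lam i • (1 : Matrix (Fin (n + 1)) (Fin (n + 1)) ℂ) - J) *
            (lam j • (1 : Matrix (Fin (n + 1)) (Fin (n + 1)) ℂ) - J)ᴴ).submatrix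
          k.succAbove k.succAbove)) /
      ((∏ p ∈ Finset.univ.erase i, (lam i - lam p)) *
        ∏ q ∈ Finset.univ.erase j, conj (lam j - lam q)) =
      if i = j then 1 else 0 := by
  have hchar := hH.charpoly_eq.symm.trans hJ
  obtain ⟨a, ha⟩ := exists_eq_of_prod_X_sub_C_eq hchar i
  have hminor (z : ℂ) : ∏ l ∈ univ.erase a, (z - RCLike.ofReal (hH.eigenvalues l)) =
      ∏ m ∈ univ.erase i, (z - lam m) := by
    simpa only [eval_prod, eval_sub, eval_X, eval_C] using
      congrArg (eval z) (prod_erase_X_sub_C_eq hchar ha)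
  rw [hH.sum_det_submatrix_succAbove_smul_sub_mul_conjTranspose,
    sum_prod_erase_eq_of_eq_zero (a := a) (by simp [ha]), prod_mul_distrib, ← map_prod,
    hminor, hminor]
  split_ifs with hij
  · subst hij
    have hD : ∏ m ∈ univ.erase i, (lam i - lam m) ≠ 0 :=
      prod_ne_zero_iff.mpr fun m hm ↦ sub_ne_zero.mpr (hd.ne (ne_of_mem_erase hm).symm)
    rw [← map_prod]
    exact div_self (mul_ne_zero hD ((_root_.map_ne_zero (starRingEnd ℂ)).mpr hD))
  · rw [prod_eq_zero (f := fun m ↦ lam j - lam m) (mem_erase.mpr ⟨Ne.symm hij, mem_univ j⟩)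
      (sub_self _), map_zero, mul_zero, zero_div]
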